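/- Let N₁ ≥ N₂ > 0 with N₂ ≤ 1 and N₁ ≥ 1. Then for functions u₁, u₂ on a time interval I of length N₁^{−1} times λ𝕋, one has ‖P_{N₁}u₁ · P_{N₂}u₂‖_{L²_t(I, L²_λ)} ≤ C·N₁^{−1/2}·N₂^{1/2}·‖P_{N₁}u₁‖_{L^∞_t(I, L²_λ)}·‖P_{N₂}u₂‖_{L^∞_t(I, L²_λ)}. -/
import Mathlib


open MeasureTheory

/-- Fourier coefficient of a `2πλ`-periodic function at frequency `ξ ∈ ℤ/λ`. -/
noncomputable def fourierCoeffLam (lam : ℝ) (f : ℝ → ℂ) (ξ : ℝ) : ℂ :=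
  ∫ x in (0:ℝ)..(2*Real.pi*lam), f x * Complex.exp (-Complex.I * ξ * x)

/-- `f` has spatial frequencies localized to `|ξ| ∼ N` on `λ𝕋`: its Fourier coefficients
vanish for `|ξ| < N/2` and for `|ξ| > 2N`. -/
def FreqLoc (lam N : ℝ) (f : ℝ → ℂ) : Prop :=
  ∀ n : ℤ, (|(n:ℝ)/lam| < N/2 ∨ 2*N < |(n:ℝ)/lam|) →
    fourierCoeffLam lam f ((n:ℝ)/lam) = 0

/-- On the circle, a function with Fourier support in a finite set `S` is bounded
pointwise by `√(#S) · ‖·‖_{L²(haar)}`. -/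
lemma circle_sup_bound {T : ℝ} [hT : Fact (0 < T)] (G : C(AddCircle T, ℂ)) (S : Finset ℤ)
    (hsupp : ∀ n ∉ S, fourierCoeff (⇑G) n = 0) (y : AddCircle T) :
    ‖G y‖^2 ≤ (S.card : ℝ) * ∫ t : AddCircle T, ‖G t‖^2 ∂AddCircle.haarAddCircle := by
  have hsummable : Summable (fourierCoeff (⇑G)) := summable_of_ne_finset_zero hsupp
  have hpar : ∑ n ∈ S, ‖fourierCoeff (⇑G) n‖^2
      ≤ ∫ t : AddCircle T, ‖G t‖^2 ∂AddCircle.haarAddCircle := by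
    have hs2 : Summable (fun n => ‖fourierCoeff (⇑G) n‖^2) :=
      summable_of_ne_finset_zero (s := S) (fun b hb => by rw [hsupp b hb]; simp)
    refine le_trans (Summable.sum_le_tsum S (fun n _ => by positivity) hs2) ?_
    have htl := tsum_sq_fourierCoeff (ContinuousMap.toLp 2 AddCircle.haarAddCircle ℂ G)
    simp_rw [fourierCoeff_toLp] at htl
    rw [htl]
    refine le_of_eq (integral_congr_ae ?_)
    filter_upwards [ContinuousMap.coeFn_toLp (p := 2) AddCircle.haarAddCircle (𝕜 := ℂ) G]
      with t ht
    rw [ht]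
  have hsum := has_pointwise_sum_fourier_series_of_summable hsummable y
  have h0 : ∀ b ∉ S, fourierCoeff (⇑G) b • fourier b y = 0 := fun b hb => by
    rw [hsupp b hb, zero_smul]
  have heq : G y = ∑ n ∈ S, fourierCoeff (⇑G) n • fourier n y :=
    ((hasSum_sum_of_ne_finset_zero h0).unique hsum).symm
  have hnorm1 : ‖G y‖ ≤ ∑ n ∈ S, ‖fourierCoeff (⇑G) n‖ := by
    rw [heq]
    refine (norm_sum_le _ _).trans (Finset.sum_le_sum fun n _ => ?_)
    rw [norm_smul]
    have h1 : ‖(fourier n : C(AddCircle T, ℂ)) y‖ ≤ 1 :=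
      (ContinuousMap.norm_coe_le_norm (fourier n) y).trans_eq (fourier_norm n)
    calc ‖fourierCoeff (⇑G) n‖ * ‖(fourier n : C(AddCircle T, ℂ)) y‖
        ≤ ‖fourierCoeff (⇑G) n‖ * 1 := mul_le_mul_of_nonneg_left h1 (norm_nonneg _)
      _ = _ := mul_one _
  calc ‖G y‖^2 ≤ (∑ n ∈ S, ‖fourierCoeff (⇑G) n‖)^2 :=
        pow_le_pow_left₀ (norm_nonneg _) hnorm1 2
    _ ≤ (S.card : ℝ) * ∑ n ∈ S, ‖fourierCoeff (⇑G) n‖^2 := sq_sum_le_card_mul_sum_sq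
    _ ≤ _ := mul_le_mul_of_nonneg_left hpar (by positivity)

set_option maxHeartbeats 1000000 in
lemma bernstein_low (lam N : ℝ) (hlam : 1 ≤ lam) (hN : 0 < N) (hNlam : 1 ≤ N * lam)
    (f : ℝ → ℂ) (hc : Continuous f)
    (hp : ∀ x, f (x + 2*Real.pi*lam) = f x) (hloc : FreqLoc lam N f) (x : ℝ) :
    ‖f x‖^2 ≤ N * ∫ y in (0:ℝ)..(2*Real.pi*lam), ‖f y‖^2 := by
  have hlam0 : (0:ℝ) < lam := lt_of_lt_of_le one_pos hlam
  obtain ⟨T, hTdef⟩ : ∃ T : ℝ, 2*Real.pi*lam = T := ⟨_, rfl⟩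
  rw [hTdef] at hp ⊢
  have hT : (0:ℝ) < T := by rw [← hTdef]; positivity
  haveI : Fact (0 < T) := ⟨hT⟩
  have hper : Function.Periodic f T := hp
  have hlift : Continuous (AddCircle.liftIco T 0 f) :=
    AddCircle.liftIco_continuous (by simpa using (hp 0).symm) hc.continuousOn
  -- liftIco agrees with f everywhere
  have hGcoe : ∀ y : ℝ, AddCircle.liftIco T 0 f (y : AddCircle T) = f y := by
    intro y
    have h1 : toIcoMod hT 0 y ∈ Set.Ico 0 (0 + T) := toIcoMod_mem_Ico hT 0 y
    have h2 : y - toIcoDiv hT 0 y • T = toIcoMod hT 0 y := self_sub_toIcoDiv_zsmul hT 0 y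
    have h3 : ((toIcoMod hT 0 y : ℝ) : AddCircle T) = (y : AddCircle T) := by
      rw [← h2, AddCircle.coe_sub, QuotientAddGroup.mk_zsmul, AddCircle.coe_period,
        smul_zero, sub_zero]
    have h4 : AddCircle.liftIco T 0 f ((toIcoMod hT 0 y : ℝ) : AddCircle T)
        = f (toIcoMod hT 0 y) := AddCircle.liftIco_coe_apply h1
    rw [← h3, h4, ← h2]
    exact hper.sub_zsmul_eq _
  -- Fourier coefficients in terms of fourierCoeffLam
  have hG_fourier : ∀ n : ℤ, fourierCoeff (AddCircle.liftIco T 0 f) n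
      = (1/T : ℝ) • fourierCoeffLam lam f ((n:ℝ)/lam) := by
    intro n
    have h1 : fourierCoeff (AddCircle.liftIco T 0 f) n
        = fourierCoeffOn (lt_add_of_pos_right 0 hT) f n := fourierCoeff_liftIco_eq f n
    rw [h1, fourierCoeffOn_eq_integral]
    simp only [zero_add, sub_zero]
    congr 1
    rw [fourierCoeffLam, hTdef]
    refine intervalIntegral.integral_congr fun y _ => ?_
    rw [fourier_coe_apply, smul_eq_mul, mul_comm]
    congr 1
    have hpi : (Real.pi : ℂ) ≠ 0 := Complex.ofReal_ne_zero.mpr Real.pi_ne_zero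
    have hl : (lam : ℂ) ≠ 0 := Complex.ofReal_ne_zero.mpr hlam0.ne'
    congr 1
    push_cast [← hTdef]
    field_simp
    ring
  -- support of coefficients
  obtain ⟨m, hmdef⟩ : ∃ m : ℤ, ⌊2*N*lam⌋ = m := ⟨_, rfl⟩
  have hm0 : (0:ℤ) ≤ m := hmdef ▸ Int.floor_nonneg.mpr (by nlinarith)
  have hsupp : ∀ n ∉ Finset.Icc (-m) m, fourierCoeff (AddCircle.liftIco T 0 f) n = 0 := by
    intro n hn
    have habs : m < |n| := by
      by_contra h
      exact hn (Finset.mem_Icc.mpr (abs_le.mp (not_lt.mp h)))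
    have h2 : 2*N*lam < |(n:ℝ)| := by
      have hint : ((m:ℝ) + 1) ≤ |(n:ℝ)| := by exact_mod_cast habs
      have hfl : 2*N*lam < (m:ℝ) + 1 := by rw [← hmdef]; exact Int.lt_floor_add_one _
      linarith
    have h3 : 2*N < |(n:ℝ)/lam| := by
      rw [abs_div, abs_of_pos hlam0, lt_div_iff₀ hlam0]
      linarith
    rw [hG_fourier n, hloc n (Or.inr h3), smul_zero]
  -- the L² integral over a period and its nonnegativity
  have hI0 : 0 ≤ ∫ y in (0:ℝ)..T, ‖f y‖^2 :=
    intervalIntegral.integral_nonneg hT.le (fun y _ => by positivity)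
  -- translate the Haar integral
  have hInt : ∫ t : AddCircle T, ‖AddCircle.liftIco T 0 f t‖^2 ∂AddCircle.haarAddCircle
      = (1/T) * ∫ y in (0:ℝ)..T, ‖f y‖^2 := by
    have h1 : ∫ a in (0:ℝ)..0+T, ‖AddCircle.liftIco T 0 f (a : AddCircle T)‖^2
        = ∫ b : AddCircle T, ‖AddCircle.liftIco T 0 f b‖^2 :=
      AddCircle.intervalIntegral_preimage T 0 (fun b => ‖AddCircle.liftIco T 0 f b‖^2)
    have h2 : ∫ b : AddCircle T, ‖AddCircle.liftIco T 0 f b‖^2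
        = T * ∫ t : AddCircle T, ‖AddCircle.liftIco T 0 f t‖^2 ∂AddCircle.haarAddCircle := by
      rw [AddCircle.volume_eq_smul_haarAddCircle, integral_smul_measure,
        ENNReal.toReal_ofReal hT.le, smul_eq_mul]
    have h3 : ∫ a in (0:ℝ)..0+T, ‖AddCircle.liftIco T 0 f (a : AddCircle T)‖^2
        = ∫ y in (0:ℝ)..T, ‖f y‖^2 := by
      rw [zero_add]
      exact intervalIntegral.integral_congr fun a _ => by rw [hGcoe a]
    have hTne : T ≠ 0 := hT.ne'
    rw [← h3, h1, h2, ← mul_assoc, one_div, inv_mul_cancel₀ hTne, one_mul]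
  -- pointwise bound from the circle lemma
  have hbound := circle_sup_bound (⟨AddCircle.liftIco T 0 f, hlift⟩ : C(AddCircle T, ℂ))
    (Finset.Icc (-m) m) hsupp (x : AddCircle T)
  simp only [ContinuousMap.coe_mk] at hbound
  rw [hInt, hGcoe x] at hbound
  -- cardinality bound
  have hcard : ((Finset.Icc (-m) m).card : ℝ) ≤ 5 * (N * lam) := by
    have h1 : (Finset.Icc (-m) m).card = (m + 1 - (-m)).toNat := Int.card_Icc _ _
    have h5 : (((Finset.Icc (-m) m).card : ℤ)) = 2*m + 1 := by rw [h1]; omega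
    have h2 : ((Finset.Icc (-m) m).card : ℝ) = 2*(m:ℝ) + 1 := by exact_mod_cast h5
    have h3 : (m:ℝ) ≤ 2*N*lam := by rw [← hmdef]; exact Int.floor_le _
    rw [h2]; nlinarith
  -- conclude
  have hfrac : 5*(N*lam)*(1/T) ≤ N := by
    rw [mul_one_div, div_le_iff₀ hT, ← hTdef]
    nlinarith [Real.pi_gt_three]
  calc ‖f x‖^2
      ≤ ((Finset.Icc (-m) m).card : ℝ) * ((1/T) * ∫ y in (0:ℝ)..T, ‖f y‖^2) := hbound
    _ ≤ (5*(N*lam)) * ((1/T) * ∫ y in (0:ℝ)..T, ‖f y‖^2) :=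
        mul_le_mul_of_nonneg_right hcard (by positivity)
    _ = (5*(N*lam)*(1/T)) * ∫ y in (0:ℝ)..T, ‖f y‖^2 := by ring
    _ ≤ N * ∫ y in (0:ℝ)..T, ‖f y‖^2 := mul_le_mul_of_nonneg_right hfrac hI0

set_option maxHeartbeats 800000 in
/-- Low-frequency case of the High×Low bilinear estimate: for `N₁ ≥ 1 ≥ N₂ ≥ λ⁻¹`, on a
time interval of length `N₁⁻¹`,
`‖P_{N₁}u₁ P_{N₂}u₂‖_{L²_t L²_λ} ≤ C N₁^{-1/2} N₂^{1/2} ‖P_{N₁}u₁‖_{L^∞_t L²_λ}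
‖P_{N₂}u₂‖_{L^∞_t L²_λ}`. -/
theorem stmt11 : ∃ C > (0:ℝ), ∀ (lam N₁ N₂ : ℝ), 1 ≤ lam → 1 ≤ N₁ → 0 < N₂ → N₂ ≤ 1 →
    N₂ ≤ N₁ → lam⁻¹ ≤ N₂ →
    ∀ (u₁ u₂ : ℝ → ℝ → ℂ) (t₀ M₁ M₂ : ℝ), 0 ≤ M₁ → 0 ≤ M₂ →
    (∀ t, Continuous (u₁ t) ∧ (∀ x, u₁ t (x + 2*Real.pi*lam) = u₁ t x) ∧
      FreqLoc lam N₁ (u₁ t)) →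
    (∀ t, Continuous (u₂ t) ∧ (∀ x, u₂ t (x + 2*Real.pi*lam) = u₂ t x) ∧
      FreqLoc lam N₂ (u₂ t)) →
    (∀ t ∈ Set.Icc t₀ (t₀ + N₁⁻¹),
      (∫ x in (0:ℝ)..(2*Real.pi*lam), ‖u₁ t x‖^2) ≤ M₁^2) →
    (∀ t ∈ Set.Icc t₀ (t₀ + N₁⁻¹),
      (∫ x in (0:ℝ)..(2*Real.pi*lam), ‖u₂ t x‖^2) ≤ M₂^2) →
    Real.sqrt (∫ t in t₀..(t₀ + N₁⁻¹), ∫ x in (0:ℝ)..(2*Real.pi*lam),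
        ‖u₁ t x * u₂ t x‖^2)
      ≤ C * N₁ ^ (-(1:ℝ)/2) * N₂ ^ ((1:ℝ)/2) * M₁ * M₂ := by
  refine ⟨1, one_pos, ?_⟩
  intro lam N₁ N₂ hlam hN₁ hN₂ hN₂1 hN₂N₁ hlamN₂ u₁ u₂ t₀ M₁ M₂ hM₁ hM₂ h₁ h₂ hb₁ hb₂
  have hlam0 : (0:ℝ) < lam := lt_of_lt_of_le one_pos hlam
  have hN₁0 : (0:ℝ) < N₁ := lt_of_lt_of_le one_pos hN₁
  have hT : (0:ℝ) < 2*Real.pi*lam := by positivity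
  have hNlam : 1 ≤ N₂ * lam := by
    have := mul_le_mul_of_nonneg_right hlamN₂ hlam0.le
    rwa [inv_mul_cancel₀ hlam0.ne'] at this
  set g : ℝ → ℝ := fun t => ∫ x in (0:ℝ)..(2*Real.pi*lam), ‖u₁ t x * u₂ t x‖^2 with hgdef
  have hg0 : ∀ t, 0 ≤ g t := fun t =>
    intervalIntegral.integral_nonneg hT.le (fun x _ => by positivity)
  -- pointwise (in t) bound on g
  have hgB : ∀ t ∈ Set.Icc t₀ (t₀ + N₁⁻¹), g t ≤ N₂ * M₂^2 * M₁^2 := by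
    intro t ht
    obtain ⟨hc₁, hp₁, hl₁⟩ := h₁ t
    obtain ⟨hc₂, hp₂, hl₂⟩ := h₂ t
    -- Bernstein for u₂ t
    have hB : ∀ x : ℝ, ‖u₂ t x‖^2 ≤ N₂ * M₂^2 := by
      intro x
      have := bernstein_low lam N₂ hlam hN₂ hNlam (u₂ t) hc₂ hp₂ hl₂ x
      have h2 := hb₂ t ht
      nlinarith
    have hi1 : IntervalIntegrable (fun x => ‖u₁ t x * u₂ t x‖^2) volume 0 (2*Real.pi*lam) :=
      (((hc₁.mul hc₂).norm.pow 2)).intervalIntegrable _ _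
    have hi2 : IntervalIntegrable (fun x => N₂ * M₂^2 * ‖u₁ t x‖^2) volume 0 (2*Real.pi*lam) :=
      ((continuous_const.mul (hc₁.norm.pow 2))).intervalIntegrable _ _
    have hmono : g t ≤ ∫ x in (0:ℝ)..(2*Real.pi*lam), N₂ * M₂^2 * ‖u₁ t x‖^2 := by
      refine intervalIntegral.integral_mono_on hT.le hi1 hi2 fun x _ => ?_
      have h3 : ‖u₁ t x * u₂ t x‖^2 = ‖u₁ t x‖^2 * ‖u₂ t x‖^2 := by
        rw [norm_mul]; ring
      rw [h3]
      have := hB x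
      nlinarith [sq_nonneg ‖u₁ t x‖, norm_nonneg (u₁ t x)]
    rw [intervalIntegral.integral_const_mul] at hmono
    have h4 := hb₁ t ht
    calc g t ≤ N₂ * M₂^2 * ∫ x in (0:ℝ)..(2*Real.pi*lam), ‖u₁ t x‖^2 := hmono
      _ ≤ N₂ * M₂^2 * M₁^2 := mul_le_mul_of_nonneg_left h4 (by positivity)
  -- time integral bound
  have hlen : t₀ ≤ t₀ + N₁⁻¹ := by
    have : (0:ℝ) < N₁⁻¹ := by positivity
    linarith
  have htime : (∫ t in t₀..(t₀ + N₁⁻¹), g t) ≤ N₂ * M₂^2 * M₁^2 * N₁⁻¹ := by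
    by_cases hi : IntervalIntegrable g volume t₀ (t₀ + N₁⁻¹)
    · calc (∫ t in t₀..(t₀ + N₁⁻¹), g t)
          ≤ ∫ _t in t₀..(t₀ + N₁⁻¹), N₂ * M₂^2 * M₁^2 :=
            intervalIntegral.integral_mono_on hlen hi intervalIntegrable_const hgB
        _ = N₂ * M₂^2 * M₁^2 * N₁⁻¹ := by
            rw [intervalIntegral.integral_const, smul_eq_mul]
            ring
    · rw [intervalIntegral.integral_undef hi]
      positivity
  -- take square roots
  have hsq : Real.sqrt (∫ t in t₀..(t₀ + N₁⁻¹), g t)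
      ≤ Real.sqrt (N₂ * M₂^2 * M₁^2 * N₁⁻¹) := Real.sqrt_le_sqrt htime
  refine hsq.trans ?_
  have e1 : Real.sqrt N₁⁻¹ = N₁ ^ (-(1:ℝ)/2) := by
    rw [Real.sqrt_eq_rpow, ← Real.rpow_neg_one N₁, ← Real.rpow_mul hN₁0.le]
    norm_num
  have e2 : Real.sqrt N₂ = N₂ ^ ((1:ℝ)/2) := Real.sqrt_eq_rpow N₂
  have hrw : Real.sqrt (N₂ * M₂^2 * M₁^2 * N₁⁻¹)
      = 1 * N₁ ^ (-(1:ℝ)/2) * N₂ ^ ((1:ℝ)/2) * M₁ * M₂ := by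
    rw [show N₂ * M₂^2 * M₁^2 * N₁⁻¹ = N₂ * (N₁⁻¹ * (M₂*M₁)^2) by ring,
      Real.sqrt_mul hN₂.le, Real.sqrt_mul (by positivity : (0:ℝ) ≤ N₁⁻¹),
      Real.sqrt_sq (by positivity), e1, e2]
    ring
  exact le_of_eq hrw
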